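/- Let w be a pp-irreducible string and c a strongly stable position of w. Then for every string x, |\widehat{w x}| > 𝓕_w(c) and c is strongly stable in \widehat{w x} (note that \widehat{w x}, being irreducible, is pp-irreducible, so stability in it is defined). -/

import Mathlib

/-!
Common definitions: strings as `List α` over an alphabet `α`, 1-based positions.
-/

variable {α : Type*}

/-- The substring `w[i:j]` (1-based, inclusive; empty when `j < i`). -/
def seg (w : List α) (i j : ℕ) : List α := (w.take j).drop (i - 1)

/-- `w` has an even palindrome of radius `r` centered at position `c`:
`r ≤ c`, `c + r ≤ |w|` and `w[c−k+1] = w[c+k]` for all `1 ≤ k ≤ r`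
(here expressed with 0-based list indexing: `w[c−k]? = w[c+k−1]?`). -/
def PalAt (w : List α) (c r : ℕ) : Prop :=
  r ≤ c ∧ c + r ≤ w.length ∧ ∀ k, 1 ≤ k → k ≤ r → w[c - k]? = w[c + k - 1]?

/-- `ρ_w(c)`: the maximal even-palindrome radius at center `c`. -/
noncomputable def rho (w : List α) (c : ℕ) : ℕ := sSup {r | PalAt w c r}

/-- The reduction relation: `x y yᴿ y z → x y z` for nonempty `y`. -/
def Reduces (w w' : List α) : Prop :=
  ∃ x y z : List α, y ≠ [] ∧ w = x ++ y ++ y.reverse ++ y ++ z ∧ w' = x ++ y ++ z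

/-- A string is irreducible if no reduction applies to it. -/
def ZIrreducible (w : List α) : Prop := ∀ w', ¬ Reduces w w'

def ZReducible (w : List α) : Prop := ∃ w', Reduces w w'

/-- `w` is pp-irreducible if its longest proper prefix `w[1:|w|−1]` is irreducible. -/
def PPIrreducible (w : List α) : Prop := ZIrreducible w.dropLast

/-- `w` is ss-reducible if it is reducible and pp-irreducible. -/
def SSReducible (w : List α) : Prop := ZReducible w ∧ PPIrreducible w

/-- A Z-shape occurrence `⟨p1, p2⟩` in `w`: with `s = p2 − p1 ≥ 1`, `p1 − s ≥ 0`,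
`p2 + s ≤ |w|` and `w[p1−s+1 : p2+s] = x xᴿ x` where `x = w[p1−s+1 : p1]`. -/
def ZOcc (w : List α) (p1 p2 : ℕ) : Prop :=
  p1 < p2 ∧ p2 - p1 ≤ p1 ∧ p2 + (p2 - p1) ≤ w.length ∧
    seg w (p1 - (p2 - p1) + 1) (p2 + (p2 - p1)) =
      seg w (p1 - (p2 - p1) + 1) p1 ++ (seg w (p1 - (p2 - p1) + 1) p1).reverse ++
        seg w (p1 - (p2 - p1) + 1) p1

/-- `c ⊏_w d` : `c ≤ d − ρ_w(d) ≤ d ≤ c + ρ_w(c) ≤ d + ρ_w(d)` with `c ≠ d`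
(written without truncated subtraction). -/
def Sqsub (w : List α) (c d : ℕ) : Prop :=
  c < d ∧ c + rho w d ≤ d ∧ d ≤ c + rho w c ∧ c + rho w c ≤ d + rho w d

/-- `𝓕_w(c)`: the maximum frontier over all palindrome chains from `c`
(a palindrome chain is a nonempty list starting at `c` whose consecutive
elements are related by `⊏_w`; its frontier is `e + ρ_w(e)` for its last element `e`). -/
noncomputable def maxFrontier (w : List α) (c : ℕ) : ℕ :=
  sSup {f | ∃ l : List ℕ, l.head? = some c ∧ l.Chain' (Sqsub w) ∧
      ∃ e, l.getLast? = some e ∧ f = e + rho w e}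

/-- `𝓐_w(d)`: the smallest position `c` with `c ≤ d ≤ 𝓕_w(c)`. -/
noncomputable def originator (w : List α) (d : ℕ) : ℕ :=
  sInf {c | 1 ≤ c ∧ c ≤ d ∧ d ≤ maxFrontier w c}

/-- A position `c` of a pp-irreducible string `w` is stable if `𝓕_w(c) < |w|`. -/
def Stable (w : List α) (c : ℕ) : Prop := maxFrontier w c < w.length

/-- `c` is strongly stable if every position in `[1:c]` is stable. -/
def StronglyStable (w : List α) (c : ℕ) : Prop := ∀ e, 1 ≤ e → e ≤ c → Stable w e

/-- `T` is the output of an end-to-end walk on the path graph labeled `u`: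
there are vertices `p 0 = 0, …, p |T| = |u|`, each `≤ |u|`, consecutive ones
adjacent, and `T[i] = u[max (p (i−1)) (p i)]` (1-based; here 0-based indexing). -/
def EndToEndWalkOutput (u T : List α) : Prop :=
  ∃ p : ℕ → ℕ, p 0 = 0 ∧ p T.length = u.length ∧
    (∀ i, i ≤ T.length → p i ≤ u.length) ∧
    (∀ i, i < T.length → p (i + 1) = p i + 1 ∨ p i = p (i + 1) + 1) ∧
    (∀ i, i < T.length → T[i]? = u[max (p i) (p (i + 1)) - 1]?)

/-- `P` is accurate enough between `a` and `b`:
`min (P e) (b − e) = min (ρ_w e) (b − e)` for all `e ∈ [a:b]`. -/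
def AccEnough (w : List α) (P : ℕ → ℕ) (a b : ℕ) : Prop :=
  ∀ e, a ≤ e → e ≤ b → min (P e) (b - e) = min (rho w e) (b - e)

open Classical in
/-- `ν_w(c)`: the largest `e` with `e ⊏_w c`, or `1` if there is none. -/
noncomputable def nu (w : List α) (c : ℕ) : ℕ :=
  if ∃ e, Sqsub w e c then sSup {e | Sqsub w e c} else 1

/-- `c` is left-good w.r.t. `P` if `P` is accurate enough between `ν_w(c)` and `c`. -/
def LeftGood (w : List α) (P : ℕ → ℕ) (c : ℕ) : Prop := AccEnough w P (nu w c) c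

/-- `c` is right-good w.r.t. `P` if `P` is accurate enough between `c` and `c + ρ_w(c)`. -/
def RightGood (w : List α) (P : ℕ → ℕ) (c : ℕ) : Prop := AccEnough w P c (c + rho w c)


/-!
Let `Λ - 1` be the largest maximum frontier `𝓕_w(e)` over `e ∈ [1, c]`; strong stability gives
`Λ ≤ |w|`. Every position `q ∈ [1, Λ)` lies between some such `e` and `𝓕_w(e)`, and then
pp-irreducibility forces `q + ρ_w(q) ≤ 𝓕_w(e)`: a palindrome at `q` reaching further would
either extend a palindrome chain from `e` or, together with the palindrome that covers `q`,
form a Z-shape `y yᴿ y` inside `w` without its last letter. Consequently a Z-shape in a string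
that agrees with `w` on its first `Λ` letters cannot have its first centre before `Λ`, so every
reduction from `w x` to its normal form keeps these letters. Palindrome chains from `e ≤ c`, and
their frontiers, only see these letters, so `𝓕(e)` is the same in `w` and in the normal form.
-/

theorem palAt_zero {w : List α} {c : ℕ} (h : c ≤ w.length) : PalAt w c 0 :=
  ⟨Nat.zero_le _, by omega, fun _ hk1 hk2 => absurd (hk1.trans hk2) (by omega)⟩

theorem PalAt.mono {w : List α} {c r r' : ℕ} (h : PalAt w c r) (hr : r' ≤ r) : PalAt w c r' :=
  ⟨hr.trans h.1, by have := h.2.1; omega, fun k h1 h2 => h.2.2 k h1 (h2.trans hr)⟩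

theorem bddAbove_palAt (w : List α) (c : ℕ) : BddAbove {r | PalAt w c r} :=
  ⟨c, fun _ hr => hr.1⟩

theorem PalAt.le_rho {w : List α} {c r : ℕ} (h : PalAt w c r) : r ≤ rho w c :=
  le_csSup (bddAbove_palAt w c) h

theorem palAt_rho {w : List α} {c : ℕ} (h : c ≤ w.length) : PalAt w c (rho w c) :=
  Nat.sSup_mem ⟨0, palAt_zero h⟩ (bddAbove_palAt w c)

theorem add_rho_le_length {w : List α} {c : ℕ} (h : c ≤ w.length) : c + rho w c ≤ w.length :=
  (palAt_rho h).2.1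

theorem List.take_append_drop_take (w : List α) {i j : ℕ} (h : i ≤ j) :
    w.take i ++ (w.take j).drop i = w.take j := by
  conv_rhs => rw [← List.take_append_drop i (w.take j), List.take_take, min_eq_left h]

theorem palAt_iff_exists_append {w : List α} {c r : ℕ} :
    PalAt w c r ↔ ∃ x y z : List α, x.length + r = c ∧ y.length = r ∧
      w = x ++ y ++ y.reverse ++ z := by
  constructor
  · rintro ⟨hrc, hcr, hpal⟩
    refine ⟨w.take (c - r), (w.take c).drop (c - r), w.drop (c + r), by simp; omega,
      by simp; omega, ?_⟩
    have hmid : (w.take (c + r)).drop c = ((w.take c).drop (c - r)).reverse := by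
      apply List.ext_getElem?
      intro i
      by_cases hi : i < r
      · rw [List.getElem?_reverse (by simp; omega), List.getElem?_drop, List.getElem?_drop,
          List.getElem?_take, List.getElem?_take, if_pos (by omega), if_pos (by simp; omega)]
        simp only [List.length_drop, List.length_take]
        rw [show c - r + (min c w.length - (c - r) - 1 - i) = c - (i + 1) by omega,
          hpal (i + 1) (by omega) (by omega)]
        congr 1
      · rw [List.getElem?_eq_none (by simp; omega), List.getElem?_eq_none (by simp; omega)]
    rw [← hmid, w.take_append_drop_take (by omega : c - r ≤ c),
      w.take_append_drop_take (by omega : c ≤ c + r), List.take_append_drop]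
  · rintro ⟨x, y, z, rfl, rfl, rfl⟩
    refine ⟨by omega, by simp; omega, fun k hk1 hk2 => ?_⟩
    have hw : x ++ y ++ y.reverse ++ z = x ++ (y ++ (y.reverse ++ z)) := by simp
    have hl : (x ++ y ++ y.reverse ++ z)[x.length + y.length - k]? = y[y.length - k]? := by
      rw [hw, List.getElem?_append_right (by omega), List.getElem?_append_left (by omega)]
      congr 1; omega
    have hr : (x ++ y ++ y.reverse ++ z)[x.length + y.length + k - 1]? = y[y.length - k]? := by
      rw [hw, List.getElem?_append_right (by omega), List.getElem?_append_right (by omega),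
        List.getElem?_append_left (by simp; omega), List.getElem?_reverse (by omega)]
      congr 1; omega
    rw [hl, hr]

theorem zReducible_of_palAt_of_palAt {w : List α} {d s : ℕ} (hs : 0 < s)
    (h₁ : PalAt w d s) (h₂ : PalAt w (d + s) s) : ZReducible w := by
  obtain ⟨x, y, z, hx, hy, hw⟩ := palAt_iff_exists_append.mp h₁
  obtain ⟨x', y', z', hx', hy', hw'⟩ := palAt_iff_exists_append.mp h₂
  have e : (x ++ y) ++ (y.reverse ++ z) = x' ++ (y' ++ (y'.reverse ++ z')) := by
    simpa using hw.symm.trans hw'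
  obtain ⟨-, e⟩ := List.append_inj e (by simp; omega)
  obtain ⟨rfl, rfl⟩ := List.append_inj e (by simp; omega)
  exact ⟨x ++ y ++ z', x, y, z', List.ne_nil_of_length_pos (by omega), by simpa using hw, rfl⟩

theorem PalAt.of_take_eq {u w : List α} {Λ d r : ℕ} (hpre : u.take Λ = w.take Λ)
    (h : PalAt u d r) (hdr : d + r ≤ Λ) : PalAt w d r := by
  have hlen := congrArg List.length hpre
  simp only [List.length_take] at hlen
  have hget : ∀ i < Λ, u[i]? = w[i]? := fun i hi => by
    rw [← List.getElem?_take_of_lt hi, hpre, List.getElem?_take_of_lt hi]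
  obtain ⟨hrd, hdu, hpal⟩ := h
  refine ⟨hrd, by omega, fun k hk1 hk2 => ?_⟩
  rw [← hget _ (by omega), ← hget _ (by omega)]
  exact hpal k hk1 hk2

theorem le_length_of_take_eq {u w : List α} {Λ : ℕ} (hpre : u.take Λ = w.take Λ)
    (hΛ : Λ ≤ w.length) : Λ ≤ u.length := by
  have hlen := congrArg List.length hpre
  simp only [List.length_take] at hlen
  omega

theorem rho_eq_of_take_eq {u w : List α} {Λ d : ℕ} (hpre : u.take Λ = w.take Λ)
    (hdw : d ≤ w.length) (hd : d + rho w d < Λ) : rho u d = rho w d := by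
  have hdu : d ≤ u.length := by
    have hlen := congrArg List.length hpre
    simp only [List.length_take] at hlen
    omega
  apply le_antisymm
  · by_contra! hlt
    have := (((palAt_rho hdu).mono hlt).of_take_eq hpre (by omega)).le_rho
    omega
  · exact ((palAt_rho hdw).of_take_eq hpre.symm (by omega)).le_rho

theorem PalAt.add_lt_of_take_eq {u w : List α} {Λ p r : ℕ} (hpre : u.take Λ = w.take Λ)
    (h : PalAt u p r) (hp : p + rho w p < Λ) : p + r < Λ := by
  by_contra! hr
  have := ((h.mono (show Λ - p ≤ r by omega)).of_take_eq hpre (by omega)).le_rho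
  omega

theorem PPIrreducible.length_le_of_palAt_of_palAt {w : List α} {d s : ℕ}
    (hpp : PPIrreducible w) (hs : 0 < s) (h₁ : PalAt w d s) (h₂ : PalAt w (d + s) s) :
    w.length ≤ d + 2 * s := by
  by_contra! h
  have hpre : w.take (w.length - 1) = w.dropLast.take (w.length - 1) := by
    rw [List.dropLast_eq_take, List.take_take, min_self]
  obtain ⟨w', hw'⟩ := zReducible_of_palAt_of_palAt hs
    (h₁.of_take_eq hpre (by omega)) (h₂.of_take_eq hpre (by omega))
  exact hpp w' hw'

theorem PPIrreducible.rho_le_sub {w : List α} {d q : ℕ} (hpp : PPIrreducible w)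
    (hd : d ≤ w.length) (hdq : d < q) (hq : q ≤ d + rho w d) : rho w q ≤ q - d := by
  by_contra! h
  have hdw := add_rho_le_length hd
  have hqw := add_rho_le_length (w := w) (c := q) (by omega)
  have h₁ : PalAt w d (q - d) := (palAt_rho hd).mono (by omega)
  have h₂ : PalAt w (d + (q - d)) (q - d) := by
    rw [show d + (q - d) = q by omega]
    exact (palAt_rho (by omega)).mono h.le
  have := hpp.length_le_of_palAt_of_palAt (by omega) h₁ h₂
  omega

theorem List.exists_isChain_iff_reflTransGen {β : Type*} {r : β → β → Prop} {a b : β} :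
    (∃ l : List β, l.head? = some a ∧ l.IsChain r ∧ l.getLast? = some b) ↔
      Relation.ReflTransGen r a b := by
  constructor
  · rintro ⟨_ | ⟨a', l⟩, ha, hl, hb⟩
    · simp at ha
    · obtain rfl : a' = a := by simpa using ha
      rw [List.getLast?_eq_some_getLast (List.cons_ne_nil _ _), Option.some_inj] at hb
      exact List.relationReflTransGen_of_exists_isChain_cons l hl hb
  · intro h
    obtain ⟨l, hl, hb⟩ := List.exists_isChain_cons_of_relationReflTransGen h
    exact ⟨a :: l, rfl, hl, by rw [List.getLast?_eq_some_getLast (List.cons_ne_nil _ _), hb]⟩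

/-- `PalChain w c d`: some palindrome chain in `w` leads from `c` to `d`
(`List.exists_isChain_iff_reflTransGen`). -/
abbrev PalChain (w : List α) : ℕ → ℕ → Prop := Relation.ReflTransGen (Sqsub w)

def frontiers (w : List α) (e : ℕ) : Set ℕ := {f | ∃ d, PalChain w e d ∧ f = d + rho w d}

theorem maxFrontier_eq_sSup (w : List α) (c : ℕ) : maxFrontier w c = sSup (frontiers w c) := by
  unfold maxFrontier
  congr 1
  ext f
  constructor
  · rintro ⟨l, ha, hl, d, hd, rfl⟩
    exact ⟨d, List.exists_isChain_iff_reflTransGen.mp ⟨l, ha, hl, hd⟩, rfl⟩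
  · rintro ⟨d, hd, rfl⟩
    obtain ⟨l, ha, hl, hd⟩ := List.exists_isChain_iff_reflTransGen.mpr hd
    exact ⟨l, ha, hl, d, hd, rfl⟩

section PalChain

variable {w : List α} {e d : ℕ}

theorem PalChain.le (h : PalChain w e d) : e ≤ d := by
  induction h with
  | refl => rfl
  | tail _ hs ih => exact ih.trans hs.1.le

theorem PalChain.add_rho_le_length (h : PalChain w e d) (he : e ≤ w.length) :
    d + rho w d ≤ w.length := by
  induction h with
  | refl => exact _root_.add_rho_le_length he
  | tail _ hs ih => exact _root_.add_rho_le_length (hs.2.2.1.trans ih)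

theorem frontiers_nonempty (w : List α) (e : ℕ) : (frontiers w e).Nonempty :=
  ⟨_, e, .refl, rfl⟩

theorem bddAbove_frontiers (he : e ≤ w.length) : BddAbove (frontiers w e) :=
  ⟨w.length, by rintro _ ⟨d, hd, rfl⟩; exact hd.add_rho_le_length he⟩

theorem PalChain.add_rho_le_maxFrontier (h : PalChain w e d) (he : e ≤ w.length) :
    d + rho w d ≤ maxFrontier w e := by
  rw [maxFrontier_eq_sSup]
  exact le_csSup (bddAbove_frontiers he) ⟨d, h, rfl⟩

theorem le_maxFrontier (he : e ≤ w.length) : e ≤ maxFrontier w e :=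
  le_of_add_le_left (PalChain.add_rho_le_maxFrontier .refl he)

theorem maxFrontier_le_length (he : e ≤ w.length) : maxFrontier w e ≤ w.length := by
  rw [maxFrontier_eq_sSup]
  exact csSup_le (frontiers_nonempty w e) (by rintro _ ⟨d, hd, rfl⟩; exact hd.add_rho_le_length he)

theorem exists_palChain_maxFrontier_eq (he : e ≤ w.length) :
    ∃ d, PalChain w e d ∧ maxFrontier w e = d + rho w d := by
  rw [maxFrontier_eq_sSup]
  exact Nat.sSup_mem (frontiers_nonempty w e) (bddAbove_frontiers he)

theorem PalChain.exists_le_le_add_rho {q : ℕ} (h : PalChain w e d) (heq : e ≤ q)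
    (hq : q ≤ d + rho w d) : ∃ b, PalChain w e b ∧ b ≤ q ∧ q ≤ b + rho w b := by
  induction h with
  | refl => exact ⟨e, .refl, heq, hq⟩
  | @tail b d hb hs ih =>
    by_cases hqb : q ≤ b + rho w b
    · exact ih hqb
    · exact ⟨d, hb.tail hs, by have := hs.2.2.1; omega, hq⟩

end PalChain

theorem PPIrreducible.add_rho_le_maxFrontier {w : List α} {e q : ℕ} (hpp : PPIrreducible w)
    (he : e ≤ w.length) (heq : e ≤ q) (hq : q ≤ maxFrontier w e) :
    q + rho w q ≤ maxFrontier w e := by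
  obtain ⟨b, hb, hF⟩ := exists_palChain_maxFrontier_eq he
  obtain ⟨d, hd, hdq, hqd⟩ := hb.exists_le_le_add_rho heq (hF ▸ hq)
  have hdF := hd.add_rho_le_maxFrontier he
  rcases hdq.eq_or_lt with rfl | hdq
  · exact hdF
  · have hρ := hpp.rho_le_sub (le_of_add_le_left (hd.add_rho_le_length he)) hdq hqd
    by_cases hcmp : d + rho w d ≤ q + rho w q
    · exact PalChain.add_rho_le_maxFrontier (hd.tail ⟨hdq, by omega, hqd, hcmp⟩) he
    · omega

theorem sqsub_iff_of_rho_eq {u w : List α} {b d : ℕ} (hb : rho u b = rho w b)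
    (hd : rho u d = rho w d) : Sqsub u b d ↔ Sqsub w b d := by
  simp only [Sqsub, hb, hd]

theorem PPIrreducible.maxFrontier_eq_of_take_eq {u w : List α} {Λ e : ℕ}
    (hpp : PPIrreducible w) (hpre : u.take Λ = w.take Λ) (he : e ≤ w.length)
    (hF : maxFrontier w e < Λ) : maxFrontier u e = maxFrontier w e := by
  have hρ : ∀ d, e ≤ d → d ≤ maxFrontier w e → rho u d = rho w d := fun d hed hdF =>
    rho_eq_of_take_eq hpre (hdF.trans (maxFrontier_le_length he))
      ((hpp.add_rho_le_maxFrontier he hed hdF).trans_lt hF)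
  have hρw : ∀ {d}, PalChain w e d → rho u d = rho w d := fun hd =>
    hρ _ hd.le (le_of_add_le_left (hd.add_rho_le_maxFrontier he))
  have hwu : ∀ {d}, PalChain w e d → PalChain u e d := by
    intro d hd
    induction hd with
    | refl => exact .refl
    | @tail b d hb hs ih =>
      exact ih.tail ((sqsub_iff_of_rho_eq (hρw hb) (hρw (hb.tail hs))).mpr hs)
  have huw : ∀ {d}, PalChain u e d → PalChain w e d := by
    intro d hd
    induction hd with
    | refl => exact .refl
    | @tail b d _ hs ih =>
      have hdF : d ≤ maxFrontier w e := by
        have := hs.2.2.1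
        have := ih.add_rho_le_maxFrontier he
        rw [hρw ih] at *
        omega
      exact ih.tail ((sqsub_iff_of_rho_eq (hρw ih) (hρ d (ih.le.trans hs.1.le) hdF)).mp hs)
  rw [maxFrontier_eq_sSup, maxFrontier_eq_sSup]
  congr 1
  ext f
  exact ⟨fun ⟨d, hd, hf⟩ => ⟨d, huw hd, by rw [hf, hρw (huw hd)]⟩,
    fun ⟨d, hd, hf⟩ => ⟨d, hwu hd, by rw [hf, hρw hd]⟩⟩

/-- Under this condition no reduction of a string that agrees with `w` on its first `Λ` letters
touches these letters (`PPIrreducible.take_eq_of_reduces`). -/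
def CoveredBelow (w : List α) (Λ : ℕ) : Prop :=
  ∀ q, 1 ≤ q → q < Λ → ∃ e, e ≤ q ∧ q ≤ maxFrontier w e ∧ maxFrontier w e < Λ

theorem PPIrreducible.take_eq_of_reduces {w u u' : List α} {Λ : ℕ} (hpp : PPIrreducible w)
    (hΛ : Λ ≤ w.length) (hcov : CoveredBelow w Λ) (hpre : u.take Λ = w.take Λ)
    (hred : Reduces u u') : u'.take Λ = w.take Λ := by
  obtain ⟨x, y, z, hy, rfl, rfl⟩ := hred
  have hs : 0 < y.length := List.length_pos_iff.mpr hy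
  have h₁ : PalAt (x ++ y ++ y.reverse ++ y ++ z) (x.length + y.length) y.length :=
    palAt_iff_exists_append.mpr ⟨x, y, y ++ z, rfl, rfl, by simp⟩
  have h₂ : PalAt (x ++ y ++ y.reverse ++ y ++ z) (x.length + y.length + y.length) y.length :=
    palAt_iff_exists_append.mpr ⟨x ++ y, y.reverse, z, by simp, by simp, by simp⟩
  have hq : Λ ≤ x.length + y.length := by
    -- otherwise both palindromes of the Z-shape would lie inside `w.take Λ`
    by_contra! hq
    obtain ⟨e, heq, hqF, hFΛ⟩ := hcov _ (by omega) hq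
    have he : e ≤ w.length := by omega
    have hqρ := hpp.add_rho_le_maxFrontier he heq hqF
    have hq₁ := h₁.add_lt_of_take_eq hpre (hqρ.trans_lt hFΛ)
    have h₁w := h₁.of_take_eq hpre hq₁.le
    have hq₂ := h₂.add_lt_of_take_eq hpre
      ((hpp.add_rho_le_maxFrontier he (by omega) (by have := h₁w.le_rho; omega)).trans_lt hFΛ)
    have := hpp.length_le_of_palAt_of_palAt hs h₁w (h₂.of_take_eq hpre hq₂.le)
    omega
  have htake : ∀ t, (x ++ y ++ t).take Λ = (x ++ y).take Λ := fun t =>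
    List.take_append_of_le_length (by simpa using hq)
  rw [← hpre, htake, show x ++ y ++ y.reverse ++ y ++ z = x ++ y ++ (y.reverse ++ y ++ z) by simp,
    htake]

theorem PPIrreducible.take_eq_of_reflTransGen {w v u : List α} {Λ : ℕ} (hpp : PPIrreducible w)
    (hΛ : Λ ≤ w.length) (hcov : CoveredBelow w Λ) (hpre : v.take Λ = w.take Λ)
    (h : Relation.ReflTransGen Reduces v u) : u.take Λ = w.take Λ := by
  induction h with
  | refl => exact hpre
  | tail _ hred ih => exact hpp.take_eq_of_reduces hΛ hcov ih hred

theorem StronglyStable.exists_cover {w : List α} {c : ℕ} (hss : StronglyStable w c)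
    (hc1 : 1 ≤ c) (hc2 : c ≤ w.length) :
    ∃ Λ ≤ w.length, (∀ e, 1 ≤ e → e ≤ c → maxFrontier w e < Λ) ∧ CoveredBelow w Λ := by
  obtain ⟨e₀, he₀, hmax⟩ :=
    (Finset.Icc 1 c).exists_max_image (maxFrontier w) ⟨c, Finset.mem_Icc.mpr ⟨hc1, le_rfl⟩⟩
  simp only [Finset.mem_Icc, and_imp] at he₀ hmax
  refine ⟨maxFrontier w e₀ + 1, hss e₀ he₀.1 he₀.2,
    fun e h1 h2 => Nat.lt_succ_of_le (hmax e h1 h2), fun q hq hqΛ => ?_⟩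
  rcases le_or_gt q c with hqc | hcq
  · exact ⟨q, le_rfl, le_maxFrontier (by omega), Nat.lt_succ_of_le (hmax q hq hqc)⟩
  · exact ⟨e₀, by omega, by omega, by omega⟩

/-- The Z-normal form is modelled by a function `N` returning an irreducible `→*`-descendant of
its argument. -/
theorem stronglyStable_preserved (N : List α → List α)
    (hN : ∀ v : List α, ZIrreducible (N v) ∧ Relation.ReflTransGen Reduces v (N v))
    (w : List α) (hpp : PPIrreducible w) (c : ℕ) (hc1 : 1 ≤ c) (hc2 : c ≤ w.length)
    (hss : StronglyStable w c) (x : List α) :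
    maxFrontier w c < (N (w ++ x)).length ∧ StronglyStable (N (w ++ x)) c := by
  obtain ⟨Λ, hΛ, hbound, hcov⟩ := hss.exists_cover hc1 hc2
  have hpre : (N (w ++ x)).take Λ = w.take Λ :=
    hpp.take_eq_of_reflTransGen hΛ hcov (List.take_append_of_le_length hΛ) (hN (w ++ x)).2
  have hlen := le_length_of_take_eq hpre hΛ
  refine ⟨(hbound c hc1 le_rfl).trans_le hlen, fun e he1 hec => ?_⟩
  rw [Stable, hpp.maxFrontier_eq_of_take_eq hpre (hec.trans hc2) (hbound e he1 hec)]
  exact (hbound e he1 hec).trans_le hlen
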